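/- arXiv:2005.04330 — 3 statements merged into one kernel-verified Lean document; each statement's English description precedes it below -/
import Mathlib

section
/- Suppose a learning algorithm L uses a model r = f(B, C w) with f : P × ℝ^m → ℝ, and parameters are determined from a data set D = {(wᵢ, rᵢ)}ᵢ₌₁ⁿ as the unique global minimizer of the regularized objective F(B, C) = 𝓛(f(B, C w₁), …, f(B, C wₙ), r₁, …, rₙ) + λ(𝓡₁(B) + ‖C‖_F²), with λ > 0. Then for any orthogonal matrix T, if the corresponding objective for the transformed data set τ(D) = {(T wᵢ, rᵢ)} also has a unique global minimizer, the algorithm is invariant to τ(w) = T w: L(τ(D), τ(w)) = L(D, w) for all w ∈ ℝ^d. -/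
open Matrix

private lemma frob_sum_trace {m d : ℕ} (M : Matrix (Fin m) (Fin d) ℝ) :
    ∑ i, ∑ j, (M i j) ^ 2 = (M * Mᵀ).trace := by
  simp [Matrix.trace, Matrix.mul_apply, Matrix.diag, sq]

private lemma frob_invariant {m d : ℕ} (C : Matrix (Fin m) (Fin d) ℝ)
    (T : Matrix (Fin d) (Fin d) ℝ) (hT : Tᵀ * T = 1) :
    ∑ i, ∑ j, ((C * Tᵀ) i j) ^ 2 = ∑ i, ∑ j, (C i j) ^ 2 := by
  rw [frob_sum_trace, frob_sum_trace, Matrix.transpose_mul, Matrix.transpose_transpose,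
    Matrix.mul_assoc, ← Matrix.mul_assoc Tᵀ, hT, Matrix.one_mul]

/-- Invariance of a learning algorithm of model form `f(B, C w)` trained by exact
minimization of the `L²`-regularized objective
`F(B,C) = 𝓛(f(B, C w₁), …, f(B, C wₙ), r₁, …, rₙ) + λ (𝓡₁(B) + ‖C‖_F²)`, `λ > 0`.
If `(Bhat, Chat)` is the unique global minimizer of `F` for the data set `D = {(wᵢ, rᵢ)}`
and `(Bhat', Chat')` is the unique global minimizer of the corresponding objective for the
transformed data set `τ(D) = {(T wᵢ, rᵢ)}` with `T` orthogonal, then for every input `w`,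
`L(τ(D), τ(w)) = L(D, w)`, i.e. `f(Bhat', Chat' (T w)) = f(Bhat, Chat w)`. -/
theorem invariance_L2_regularization {P : Type*} {m d n : ℕ}
    (f : P → (Fin m → ℝ) → ℝ)
    (𝓛 : (Fin n → ℝ) → (Fin n → ℝ) → ℝ)
    (𝓡₁ : P → ℝ) (lam : ℝ) (hlam : 0 < lam)
    (w : Fin n → (Fin d → ℝ)) (r : Fin n → ℝ)
    (T : Matrix (Fin d) (Fin d) ℝ) (hT : Tᵀ * T = 1)
    (Bhat : P) (Chat : Matrix (Fin m) (Fin d) ℝ)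
    (Bhat' : P) (Chat' : Matrix (Fin m) (Fin d) ℝ)
    -- (Bhat, Chat) uniquely globally minimizes the regularized objective for D
    (hmin : ∀ (B : P) (C : Matrix (Fin m) (Fin d) ℝ),
      𝓛 (fun i => f Bhat (Chat.mulVec (w i))) r + lam * (𝓡₁ Bhat + ∑ i, ∑ j, (Chat i j) ^ 2) ≤
        𝓛 (fun i => f B (C.mulVec (w i))) r + lam * (𝓡₁ B + ∑ i, ∑ j, (C i j) ^ 2))
    (huniq : ∀ (B : P) (C : Matrix (Fin m) (Fin d) ℝ),
      𝓛 (fun i => f B (C.mulVec (w i))) r + lam * (𝓡₁ B + ∑ i, ∑ j, (C i j) ^ 2) =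
          𝓛 (fun i => f Bhat (Chat.mulVec (w i))) r +
            lam * (𝓡₁ Bhat + ∑ i, ∑ j, (Chat i j) ^ 2) →
        B = Bhat ∧ C = Chat)
    -- (Bhat', Chat') uniquely globally minimizes the regularized objective for τ(D)
    (hmin' : ∀ (B : P) (C : Matrix (Fin m) (Fin d) ℝ),
      𝓛 (fun i => f Bhat' (Chat'.mulVec (T.mulVec (w i)))) r +
          lam * (𝓡₁ Bhat' + ∑ i, ∑ j, (Chat' i j) ^ 2) ≤
        𝓛 (fun i => f B (C.mulVec (T.mulVec (w i)))) r +
          lam * (𝓡₁ B + ∑ i, ∑ j, (C i j) ^ 2))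
    (huniq' : ∀ (B : P) (C : Matrix (Fin m) (Fin d) ℝ),
      𝓛 (fun i => f B (C.mulVec (T.mulVec (w i)))) r +
          lam * (𝓡₁ B + ∑ i, ∑ j, (C i j) ^ 2) =
        𝓛 (fun i => f Bhat' (Chat'.mulVec (T.mulVec (w i)))) r +
          lam * (𝓡₁ Bhat' + ∑ i, ∑ j, (Chat' i j) ^ 2) →
        B = Bhat' ∧ C = Chat') :
    ∀ v : Fin d → ℝ, f Bhat' (Chat'.mulVec (T.mulVec v)) = f Bhat (Chat.mulVec v) := by
  
  have hTT : T * Tᵀ = 1 := mul_eq_one_comm.mp hT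
  -- objective for τ(D) at (B, C) equals objective for D at (B, C*T)
  have hmv : ∀ (C : Matrix (Fin m) (Fin d) ℝ) (v : Fin d → ℝ),
      C.mulVec (T.mulVec v) = (C * T).mulVec v := by
    intro C v; rw [Matrix.mulVec_mulVec]
  -- (Bhat, Chat * Tᵀ) is a global minimizer of the τ(D) objective
  have key : 𝓛 (fun i => f Bhat ((Chat * Tᵀ).mulVec (T.mulVec (w i)))) r +
      lam * (𝓡₁ Bhat + ∑ i, ∑ j, ((Chat * Tᵀ) i j) ^ 2) ≤
      𝓛 (fun i => f Bhat' (Chat'.mulVec (T.mulVec (w i)))) r +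
      lam * (𝓡₁ Bhat' + ∑ i, ∑ j, (Chat' i j) ^ 2) := by
    have h1 : ∀ i, (Chat * Tᵀ).mulVec (T.mulVec (w i)) = Chat.mulVec (w i) := by
      intro i
      rw [hmv, Matrix.mul_assoc, hT, Matrix.mul_one]
    have h2 := hmin Bhat' (Chat' * T)
    simp only [h1, frob_invariant Chat T hT]
    calc 𝓛 (fun i => f Bhat (Chat.mulVec (w i))) r +
          lam * (𝓡₁ Bhat + ∑ i, ∑ j, (Chat i j) ^ 2)
        ≤ 𝓛 (fun i => f Bhat' ((Chat' * T).mulVec (w i))) r +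
          lam * (𝓡₁ Bhat' + ∑ i, ∑ j, ((Chat' * T) i j) ^ 2) := h2
      _ = 𝓛 (fun i => f Bhat' (Chat'.mulVec (T.mulVec (w i)))) r +
          lam * (𝓡₁ Bhat' + ∑ i, ∑ j, (Chat' i j) ^ 2) := by
          congr 2
          · funext i; rw [hmv]
          · have := frob_invariant (Chat' * T) T hT
            rw [Matrix.mul_assoc, hTT, Matrix.mul_one] at this
            rw [this]
  have heq := le_antisymm (hmin' Bhat (Chat * Tᵀ)) key
  obtain ⟨hB, hC⟩ := huniq' Bhat (Chat * Tᵀ) heq.symm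
  intro v
  rw [← hB, ← hC, hmv, Matrix.mul_assoc, hT, Matrix.mul_one]
end

section
/- Suppose a learning algorithm L uses a model r = f(B, C w) with f : P × ℝ^m → ℝ, and parameters are determined from a data set D = {(wᵢ, rᵢ)}ᵢ₌₁ⁿ as the unique global minimizer of the regularized objective F(B, C) = 𝓛(f(B, C w₁), …, f(B, C wₙ), r₁, …, rₙ) + λ(𝓡₁(B) + ∑ᵢ∑ⱼ |Cᵢⱼ|), with λ > 0 (L¹ regularization). Then for any permutation matrix T, if the corresponding objective for the transformed data set τ(D) = {(T wᵢ, rᵢ)} also has a unique global minimizer, the algorithm is invariant to τ(w) = T w: L(τ(D), τ(w)) = L(D, w) for all w ∈ ℝ^d. -/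
/-! Right multiplication by the permutation matrix `T` is a bijection of the coefficient matrices
that preserves `∑ᵢ∑ⱼ |Cᵢⱼ|`, and `C (T w) = (C T) w`. Hence the objective for `τ(D)` at `(B, C)`
is the objective for `D` at `(B, C T)`, so `(B̂', Ĉ' T)` minimizes the objective for `D` and by
uniqueness equals `(B̂, Ĉ)`. Then `f(B̂', Ĉ' (T w)) = f(B̂', (Ĉ' T) w) = f(B̂, Ĉ w)`. -/

open Matrix Function Equiv

theorem Function.Surjective.apply_eq_unique_minimizer {X Y β : Type*} [PartialOrder β]
    {F : X → β} {x₀ : X} (hmin : ∀ x, F x₀ ≤ F x) (huniq : ∀ x, F x = F x₀ → x = x₀)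
    {g : Y → X} (hg : Surjective g) {y₀ : Y} (hy₀ : ∀ y, F (g y₀) ≤ F (g y)) :
    g y₀ = x₀ := by
  obtain ⟨y, rfl⟩ := hg x₀
  exact huniq _ (le_antisymm (hy₀ y) (hmin _))

section PermMatrix

variable {l n R : Type*} [Fintype n] [DecidableEq n]

theorem Matrix.mul_permMatrix_surjective [Semiring R] (σ : Perm n) :
    Surjective fun M : Matrix l n R => M * σ.permMatrix R := fun M =>
  ⟨M * σ⁻¹.permMatrix R, by
    dsimp only
    rw [Matrix.mul_assoc, ← permMatrix_mul, mul_inv_cancel, permMatrix_one, Matrix.mul_one]⟩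

theorem Matrix.sum_abs_mul_permMatrix [Fintype l] [Ring R] [LinearOrder R]
    (σ : Perm n) (M : Matrix l n R) :
    ∑ i, ∑ j, |(M * σ.permMatrix R) i j| = ∑ i, ∑ j, |M i j| := by
  simp only [PEquiv.mul_toMatrix_toPEquiv, submatrix_apply, id]
  exact Finset.sum_congr rfl fun i _ => σ.symm.sum_comp fun j => |M i j|

end PermMatrix

section RegularizedObjective

variable {P ι κ δ : Type*} [Fintype κ] [Fintype δ]

def regularizedObjective (f : P → (κ → ℝ) → ℝ) (𝓛 : (ι → ℝ) → (ι → ℝ) → ℝ) (𝓡₁ : P → ℝ)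
    (lam : ℝ) (w : ι → δ → ℝ) (r : ι → ℝ) (p : P × Matrix κ δ ℝ) : ℝ :=
  𝓛 (fun i => f p.1 (p.2 *ᵥ w i)) r + lam * (𝓡₁ p.1 + ∑ i, ∑ j, |p.2 i j|)

theorem regularizedObjective_permMatrix_mulVec [DecidableEq δ] (f : P → (κ → ℝ) → ℝ)
    (𝓛 : (ι → ℝ) → (ι → ℝ) → ℝ) (𝓡₁ : P → ℝ) (lam : ℝ) (w : ι → δ → ℝ) (r : ι → ℝ)
    (σ : Perm δ) (B : P) (C : Matrix κ δ ℝ) :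
    regularizedObjective f 𝓛 𝓡₁ lam (fun i => σ.permMatrix ℝ *ᵥ w i) r (B, C) =
      regularizedObjective f 𝓛 𝓡₁ lam w r (B, C * σ.permMatrix ℝ) := by
  simp only [regularizedObjective, mulVec_mulVec, sum_abs_mul_permMatrix]

end RegularizedObjective

theorem invariance_L1_regularization_general {P : Type*} {m d n : ℕ}
    (f : P → (Fin m → ℝ) → ℝ)
    (𝓛 : (Fin n → ℝ) → (Fin n → ℝ) → ℝ)
    (𝓡₁ : P → ℝ) (lam : ℝ)
    (w : Fin n → (Fin d → ℝ)) (r : Fin n → ℝ)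
    (T : Matrix (Fin d) (Fin d) ℝ)
    (σ : Equiv.Perm (Fin d)) (hT : ∀ i j, T i j = if σ i = j then (1 : ℝ) else 0)
    (Bhat : P) (Chat : Matrix (Fin m) (Fin d) ℝ)
    (Bhat' : P) (Chat' : Matrix (Fin m) (Fin d) ℝ)
    -- (Bhat, Chat) uniquely globally minimizes the regularized objective for D
    (hmin : ∀ (B : P) (C : Matrix (Fin m) (Fin d) ℝ),
      𝓛 (fun i => f Bhat (Chat.mulVec (w i))) r + lam * (𝓡₁ Bhat + ∑ i, ∑ j, |Chat i j|) ≤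
        𝓛 (fun i => f B (C.mulVec (w i))) r + lam * (𝓡₁ B + ∑ i, ∑ j, |C i j|))
    (huniq : ∀ (B : P) (C : Matrix (Fin m) (Fin d) ℝ),
      𝓛 (fun i => f B (C.mulVec (w i))) r + lam * (𝓡₁ B + ∑ i, ∑ j, |C i j|) =
          𝓛 (fun i => f Bhat (Chat.mulVec (w i))) r +
            lam * (𝓡₁ Bhat + ∑ i, ∑ j, |Chat i j|) →
        B = Bhat ∧ C = Chat)
    -- (Bhat', Chat') uniquely globally minimizes the regularized objective for τ(D)
    (hmin' : ∀ (B : P) (C : Matrix (Fin m) (Fin d) ℝ),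
      𝓛 (fun i => f Bhat' (Chat'.mulVec (T.mulVec (w i)))) r +
          lam * (𝓡₁ Bhat' + ∑ i, ∑ j, |Chat' i j|) ≤
        𝓛 (fun i => f B (C.mulVec (T.mulVec (w i)))) r +
          lam * (𝓡₁ B + ∑ i, ∑ j, |C i j|)) :
    ∀ v : Fin d → ℝ, f Bhat' (Chat'.mulVec (T.mulVec v)) = f Bhat (Chat.mulVec v) := by
  obtain rfl : T = σ.permMatrix ℝ := by
    ext i j
    simp [hT, PEquiv.toMatrix_apply]
  set F := regularizedObjective f 𝓛 𝓡₁ lam w r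
  set g := Prod.map id fun C : Matrix (Fin m) (Fin d) ℝ => C * σ.permMatrix ℝ
  have hmin'_comp : ∀ p, F (g (Bhat', Chat')) ≤ F (g p) := fun ⟨B, C⟩ => by
    simp only [F, g, Prod.map_apply, id, ← regularizedObjective_permMatrix_mulVec]
    exact hmin' B C
  have hpullback : g (Bhat', Chat') = (Bhat, Chat) :=
    (surjective_id.prodMap (mul_permMatrix_surjective σ)).apply_eq_unique_minimizer
      (fun p => hmin p.1 p.2) (fun p hp => Prod.ext_iff.2 (huniq p.1 p.2 hp)) hmin'_comp
  obtain ⟨hB, hC⟩ : Bhat' = Bhat ∧ Chat' * σ.permMatrix ℝ = Chat := Prod.ext_iff.1 hpullback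
  intro v
  rw [mulVec_mulVec, hB, hC]

/-- Invariance of a learning algorithm of model form `f(B, C w)` trained by exact
minimization of the `L¹`-regularized objective
`F(B,C) = 𝓛(f(B, C w₁), …, f(B, C wₙ), r₁, …, rₙ) + λ (𝓡₁(B) + ∑ᵢ∑ⱼ |Cᵢⱼ|)`, `λ > 0`.
If `(Bhat, Chat)` is the unique global minimizer of `F` for the data set `D = {(wᵢ, rᵢ)}`
and `(Bhat', Chat')` is the unique global minimizer of the corresponding objective for the
transformed data set `τ(D) = {(T wᵢ, rᵢ)}` with `T` a permutation matrix (the matrix of a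
permutation `σ`), then for every input `w`, `L(τ(D), τ(w)) = L(D, w)`, i.e.
`f(Bhat', Chat' (T w)) = f(Bhat, Chat w)`. -/
theorem invariance_L1_regularization {P : Type*} {m d n : ℕ}
    (f : P → (Fin m → ℝ) → ℝ)
    (𝓛 : (Fin n → ℝ) → (Fin n → ℝ) → ℝ)
    (𝓡₁ : P → ℝ) (lam : ℝ) (hlam : 0 < lam)
    (w : Fin n → (Fin d → ℝ)) (r : Fin n → ℝ)
    (T : Matrix (Fin d) (Fin d) ℝ)
    (σ : Equiv.Perm (Fin d)) (hT : ∀ i j, T i j = if σ i = j then (1 : ℝ) else 0)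
    (Bhat : P) (Chat : Matrix (Fin m) (Fin d) ℝ)
    (Bhat' : P) (Chat' : Matrix (Fin m) (Fin d) ℝ)
    -- (Bhat, Chat) uniquely globally minimizes the regularized objective for D
    (hmin : ∀ (B : P) (C : Matrix (Fin m) (Fin d) ℝ),
      𝓛 (fun i => f Bhat (Chat.mulVec (w i))) r + lam * (𝓡₁ Bhat + ∑ i, ∑ j, |Chat i j|) ≤
        𝓛 (fun i => f B (C.mulVec (w i))) r + lam * (𝓡₁ B + ∑ i, ∑ j, |C i j|))
    (huniq : ∀ (B : P) (C : Matrix (Fin m) (Fin d) ℝ),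
      𝓛 (fun i => f B (C.mulVec (w i))) r + lam * (𝓡₁ B + ∑ i, ∑ j, |C i j|) =
          𝓛 (fun i => f Bhat (Chat.mulVec (w i))) r +
            lam * (𝓡₁ Bhat + ∑ i, ∑ j, |Chat i j|) →
        B = Bhat ∧ C = Chat)
    -- (Bhat', Chat') uniquely globally minimizes the regularized objective for τ(D)
    (hmin' : ∀ (B : P) (C : Matrix (Fin m) (Fin d) ℝ),
      𝓛 (fun i => f Bhat' (Chat'.mulVec (T.mulVec (w i)))) r +
          lam * (𝓡₁ Bhat' + ∑ i, ∑ j, |Chat' i j|) ≤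
        𝓛 (fun i => f B (C.mulVec (T.mulVec (w i)))) r +
          lam * (𝓡₁ B + ∑ i, ∑ j, |C i j|))
    (huniq' : ∀ (B : P) (C : Matrix (Fin m) (Fin d) ℝ),
      𝓛 (fun i => f B (C.mulVec (T.mulVec (w i)))) r +
          lam * (𝓡₁ B + ∑ i, ∑ j, |C i j|) =
        𝓛 (fun i => f Bhat' (Chat'.mulVec (T.mulVec (w i)))) r +
          lam * (𝓡₁ Bhat' + ∑ i, ∑ j, |Chat' i j|) →
        B = Bhat' ∧ C = Chat') :
    ∀ v : Fin d → ℝ, f Bhat' (Chat'.mulVec (T.mulVec v)) = f Bhat (Chat.mulVec v) :=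
  invariance_L1_regularization_general f 𝓛 𝓡₁ lam w r T σ hT Bhat Chat Bhat' Chat' hmin huniq hmin'
end

section
/- Under the setting of equivariant gradient-descent training — F : P × ℝ^{m×d} → ℝ differentiable in C, T orthogonal, F'(B, C) = F(B, C T), iterates C_{i+1} = Cᵢ + θᵢ (∂F/∂C)(Bᵢ, Cᵢ), C'_{i+1} = C'ᵢ + θᵢ (∂F'/∂C)(B'ᵢ, C'ᵢ), matching B-updates, and initializations with C'₀ T = C₀ and B'₀ = B₀ — for any model f : P × ℝ^m → ℝ and any input w ∈ ℝ^d, the outputs after k steps agree on the transformed input: f(B'_k, C'_k (T w)) = f(B_k, C_k w). -/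
open Matrix

attribute [local instance] Matrix.normedAddCommGroup Matrix.normedSpace

/-- The gradient `∂F/∂C` of an objective `F : P × ℝ^{m×d} → ℝ` with respect to its matrix
argument (w.r.t. the Frobenius inner product): the matrix of partial derivatives. -/
noncomputable def gradC {P : Type*} {m d : ℕ} (F : P → Matrix (Fin m) (Fin d) ℝ → ℝ)
    (B : P) (C : Matrix (Fin m) (Fin d) ℝ) : Matrix (Fin m) (Fin d) ℝ :=
  Matrix.of fun i j => fderiv ℝ (F B) C (Matrix.single i j 1)

/-!
Right multiplication by `T` intertwines the two training runs. By the chain rule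
`∂F'/∂C (B, C) = ∂F/∂C (B, C T) · Tᵀ`, so orthogonality of `T` gives
`∂F'/∂C (B, C) · T = ∂F/∂C (B, C T)`. Hence, by induction, `C'ᵢ T = Cᵢ` and `B'ᵢ = Bᵢ` for all `i`,
and `C'ₖ (T w) = (C'ₖ T) w = Cₖ w`.
-/

namespace Matrix

variable {R : Type*} [CommSemiring R] {m n p : Type*} [Fintype n]
  [DecidableEq m] [DecidableEq n] [DecidableEq p]

theorem single_one_mul_eq_sum [Fintype p] (i : m) (j : n) (T : Matrix n p R) :
    single i j (1 : R) * T = ∑ k, T j k • single i k (1 : R) := by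
  ext a b
  by_cases h : a = i
  · subst h; simp [Matrix.sum_apply, single_apply]
  · simp [Matrix.sum_apply, single_mul_apply_of_ne _ _ _ _ _ h, Ne.symm h]

theorem of_map_single_one_mul [Fintype p] (φ : Matrix m p R →ₗ[R] R) (T : Matrix n p R) :
    (of fun i j => φ (single i j (1 : R) * T)) = (of fun i k => φ (single i k (1 : R))) * Tᵀ := by
  ext i j
  simp only [of_apply, mul_apply, transpose_apply, single_one_mul_eq_sum, map_sum, map_smul,
    smul_eq_mul, mul_comm]

end Matrix

theorem gradC_comp_mul_right {P : Type*} {m d : ℕ} (F : P → Matrix (Fin m) (Fin d) ℝ → ℝ)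
    (T : Matrix (Fin d) (Fin d) ℝ) (B : P) (C : Matrix (Fin m) (Fin d) ℝ)
    (hF : DifferentiableAt ℝ (F B) (C * T)) :
    gradC (fun B C => F B (C * T)) B C = gradC F B (C * T) * Tᵀ := by
  let L := (mulRightLinearMap (Fin m) ℝ T).toContinuousLinearMap
  have hL : fderiv ℝ (fun X => F B (X * T)) C = (fderiv ℝ (F B) (C * T)).comp L :=
    (hF.hasFDerivAt.comp C L.hasFDerivAt).fderiv
  simp only [gradC, hL]
  exact of_map_single_one_mul (fderiv ℝ (F B) (C * T)).toLinearMap T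

/-- Under equivariant gradient-descent training (`F` differentiable in `C`, `T` orthogonal,
`F'(B,C) = F(B, C T)`, gradient-descent iterates for `C` with matching `B`-updates, and
initializations `C'₀ T = C₀`, `B'₀ = B₀`), for any model `f : P × ℝ^m → ℝ` and any input
`w ∈ ℝ^d`, the outputs after `k` steps agree on the transformed input:
`f(B'_k, C'_k (T w)) = f(B_k, C_k w)`. -/
theorem gradient_descent_invariant_prediction {P : Type*} {m d : ℕ}
    (F : P → Matrix (Fin m) (Fin d) ℝ → ℝ)
    (hF : ∀ B : P, Differentiable ℝ (F B))
    (T : Matrix (Fin d) (Fin d) ℝ) (hT : Tᵀ * T = 1)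
    (F' : P → Matrix (Fin m) (Fin d) ℝ → ℝ)
    (hF' : ∀ B C, F' B C = F B (C * T))
    (k : ℕ) (θ : ℕ → ℝ)
    (Φ : (P → Matrix (Fin m) (Fin d) ℝ → ℝ) → P → Matrix (Fin m) (Fin d) ℝ → P)
    (hΦ : ∀ (B : P) (C : Matrix (Fin m) (Fin d) ℝ), Φ F' B C = Φ F B (C * T))
    (B B' : ℕ → P) (C C' : ℕ → Matrix (Fin m) (Fin d) ℝ)
    (hC : ∀ i, C (i + 1) = C i + θ i • gradC F (B i) (C i))
    (hB : ∀ i, B (i + 1) = Φ F (B i) (C i))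
    (hC' : ∀ i, C' (i + 1) = C' i + θ i • gradC F' (B' i) (C' i))
    (hB' : ∀ i, B' (i + 1) = Φ F' (B' i) (C' i))
    (hC0 : C' 0 * T = C 0) (hB0 : B' 0 = B 0)
    (f : P → (Fin m → ℝ) → ℝ) (w : Fin d → ℝ) :
    f (B' k) ((C' k).mulVec (T.mulVec w)) = f (B k) ((C k).mulVec w) := by
  have hgrad : ∀ B C, gradC F' B C * T = gradC F B (C * T) := by
    intro B C
    rw [show F' = fun B C => F B (C * T) from funext₂ hF', gradC_comp_mul_right F T B C (hF B _),
      Matrix.mul_assoc, hT, Matrix.mul_one]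
  have hiterate : ∀ i, C' i * T = C i ∧ B' i = B i := by
    intro i
    induction i with
    | zero => exact ⟨hC0, hB0⟩
    | succ i ih =>
      obtain ⟨hCi, hBi⟩ := ih
      exact ⟨by rw [hC', hC, Matrix.add_mul, Matrix.smul_mul, hgrad, hCi, hBi],
        by rw [hB', hB, hΦ, hCi, hBi]⟩
  obtain ⟨hCk, hBk⟩ := hiterate k
  rw [mulVec_mulVec, hCk, hBk]
end
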